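/- Let R be a local ring and s a central unit of R. A matrix A ∈ M₂(R;s) is strongly J-clean if and only if A ∈ J(M₂(R;s)), or I₂ - A ∈ J(M₂(R;s)), or A is similar to a diagonal matrix diag(v, w) with v ∈ 1 + J(R) and w ∈ J(R). -/

import Mathlib

/-- The formal matrix ring `M₂(R;s)`: 2×2 matrices over `R` recorded by their four
entries, with the twisted multiplication
`[[a,b],[c,d]]·[[a',b'],[c',d']] = [[aa'+s²bc', ab'+bd'],[ca'+dc', s²cb'+dd']]`. -/
@[ext]
structure FM (R : Type*) (s : R) : Type _ where
  a : R
  b : R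
  c : R
  d : R

namespace FM

variable {R : Type*} [Ring R] {s : R}

instance : Zero (FM R s) := ⟨⟨0, 0, 0, 0⟩⟩
instance : One (FM R s) := ⟨⟨1, 0, 0, 1⟩⟩
instance : Add (FM R s) := ⟨fun x y => ⟨x.a + y.a, x.b + y.b, x.c + y.c, x.d + y.d⟩⟩
instance : Neg (FM R s) := ⟨fun x => ⟨-x.a, -x.b, -x.c, -x.d⟩⟩
instance : Mul (FM R s) :=
  ⟨fun x y => ⟨x.a * y.a + s * s * (x.b * y.c), x.a * y.b + x.b * y.d,
    x.c * y.a + x.d * y.c, s * s * (x.c * y.b) + x.d * y.d⟩⟩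

@[simp] lemma zero_a : (0 : FM R s).a = 0 := rfl
@[simp] lemma zero_b : (0 : FM R s).b = 0 := rfl
@[simp] lemma zero_c : (0 : FM R s).c = 0 := rfl
@[simp] lemma zero_d : (0 : FM R s).d = 0 := rfl
@[simp] lemma one_a : (1 : FM R s).a = 1 := rfl
@[simp] lemma one_b : (1 : FM R s).b = 0 := rfl
@[simp] lemma one_c : (1 : FM R s).c = 0 := rfl
@[simp] lemma one_d : (1 : FM R s).d = 1 := rfl
@[simp] lemma add_a (x y : FM R s) : (x + y).a = x.a + y.a := rfl
@[simp] lemma add_b (x y : FM R s) : (x + y).b = x.b + y.b := rfl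
@[simp] lemma add_c (x y : FM R s) : (x + y).c = x.c + y.c := rfl
@[simp] lemma add_d (x y : FM R s) : (x + y).d = x.d + y.d := rfl
@[simp] lemma neg_a (x : FM R s) : (-x).a = -x.a := rfl
@[simp] lemma neg_b (x : FM R s) : (-x).b = -x.b := rfl
@[simp] lemma neg_c (x : FM R s) : (-x).c = -x.c := rfl
@[simp] lemma neg_d (x : FM R s) : (-x).d = -x.d := rfl
@[simp] lemma mul_a (x y : FM R s) : (x * y).a = x.a * y.a + s * s * (x.b * y.c) := rfl
@[simp] lemma mul_b (x y : FM R s) : (x * y).b = x.a * y.b + x.b * y.d := rfl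
@[simp] lemma mul_c (x y : FM R s) : (x * y).c = x.c * y.a + x.d * y.c := rfl
@[simp] lemma mul_d (x y : FM R s) : (x * y).d = s * s * (x.c * y.b) + x.d * y.d := rfl

instance : AddCommGroup (FM R s) where
  add_assoc x y z := by ext <;> simp [add_assoc]
  zero_add x := by ext <;> simp
  add_zero x := by ext <;> simp
  add_comm x y := by ext <;> simp [add_comm]
  neg_add_cancel x := by ext <;> simp
  nsmul := nsmulRec
  zsmul := zsmulRec

/-- When `s` is central in `R`, `M₂(R;s)` is a ring. -/
instance [hs : Fact (∀ x : R, s * x = x * s)] : Ring (FM R s) where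
  __ := (inferInstance : AddCommGroup (FM R s))
  mul := (· * ·)
  one := 1
  mul_assoc x y z := by
    have hc : ∀ u v : R, u * (s * v) = s * (u * v) := fun u v => by
      rw [← mul_assoc, ← hs.out u, mul_assoc]
    ext <;> simp only [mul_a, mul_b, mul_c, mul_d, mul_add, add_mul, mul_assoc, hc] <;> abel
  one_mul x := by ext <;> simp
  mul_one x := by ext <;> simp
  left_distrib x y z := by ext <;> simp [mul_add, add_mul] <;> abel
  right_distrib x y z := by ext <;> simp [mul_add, add_mul] <;> abel
  zero_mul x := by ext <;> simp
  mul_zero x := by ext <;> simp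

/-- In a commutative ring every element is central. -/
instance (priority := 100) {R : Type*} [CommRing R] (s : R) : Fact (∀ x : R, s * x = x * s) :=
  ⟨fun x => mul_comm s x⟩

end FM

/-- An element is strongly J-clean if it is the sum of an idempotent and an element of
the Jacobson radical which commute. -/
def IsStronglyJClean {A : Type*} [Ring A] (x : A) : Prop :=
  ∃ e : A, IsIdempotentElem e ∧ x * e = e * x ∧ x - e ∈ (⊥ : Ideal A).jacobson

/-- An element is strongly clean if it is the sum of an idempotent and a unit
which commute. -/
def IsStronglyClean {A : Type*} [Ring A] (x : A) : Prop :=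
  ∃ e : A, IsIdempotentElem e ∧ x * e = e * x ∧ IsUnit (x - e)

/-- An element is strongly nil clean if it is the sum of an idempotent and a nilpotent
which commute. -/
def IsStronglyNilClean {A : Type*} [Ring A] (x : A) : Prop :=
  ∃ e : A, IsIdempotentElem e ∧ x * e = e * x ∧ IsNilpotent (x - e)

/-!
Over a local ring every idempotent `E ≠ 0, 1` of `M₂(R;s)` is conjugate to `diag(1,0)`. For
idempotents `e`, `p` of any ring, `u = pe + (1-p)(1-e)` satisfies `ue = pu`, and with
`v = ep + (1-e)(1-p)` both `uv` and `vu` equal `1 - (e-p)²`. For `p = diag(1,0)` this is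
`diag(E₁₁, 1 - E₂₂)`, for `p = diag(0,1)` it is `diag(1 - E₁₁, E₂₂)`, and locality of `R` makes one
of them a unit unless `E` or `1 - E` has its diagonal, hence itself, in the radical. Conjugating a
decomposition `A = E + W` so that `E` becomes `diag(1,0)` turns `A` into a matrix commuting with
`diag(1,0)`, i.e. a diagonal one. The radical is read off from `M₂(R)`: for a central unit `s`,
`[[a,b],[c,d]] ↦ [[a,sb],[sc,d]]` is a ring isomorphism `M₂(R;s) ≃ M₂(R)`.
-/

section Jacobson

variable {A : Type*} [Ring A]

theorem RingEquiv.map_mem_jacobson_bot_iff {B : Type*} [Ring B] (f : A ≃+* B) {x : A} :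
    f x ∈ (⊥ : Ideal B).jacobson ↔ x ∈ (⊥ : Ideal A).jacobson := by
  show x ∈ Ideal.comap (f : A →+* B) (⊥ : Ideal B).jacobson ↔ _
  rw [Ideal.comap_jacobson_of_surjective f.surjective,
    Ideal.comap_bot_of_injective (f : A →+* B) f.injective]

theorem isUnit_one_sub_of_mem_jacobson_bot {x : A} (hx : x ∈ (⊥ : Ideal A).jacobson) :
    IsUnit (1 - x) := by
  have hleft : ∀ y ∈ (⊥ : Ideal A).jacobson, ∃ z, z * (1 - y) = 1 := fun y hy => by
    obtain ⟨z, hz⟩ := Ideal.mem_jacobson_iff.mp hy (-1)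
    exact ⟨z, by rw [Ideal.mem_bot] at hz; rw [← sub_eq_zero, ← hz]; noncomm_ring⟩
  obtain ⟨z, hz⟩ := hleft x hx
  obtain ⟨w, hw⟩ := hleft (-(z * x)) (neg_mem (Ideal.mul_mem_left _ z hx))
  have hz' : 1 - -(z * x) = z := by rw [← hz]; noncomm_ring
  rw [hz'] at hw
  exact isUnit_iff_exists_and_exists.mpr
    ⟨⟨z, by rw [← left_inv_eq_right_inv hw hz, hw]⟩, ⟨z, hz⟩⟩

theorem IsIdempotentElem.eq_zero_of_mem_jacobson_bot {e : A} (he : IsIdempotentElem e)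
    (hJ : e ∈ (⊥ : Ideal A).jacobson) : e = 0 :=
  (isUnit_one_sub_of_mem_jacobson_bot hJ).mul_left_eq_zero.mp
    (by rw [mul_sub, mul_one, he.eq, sub_self])

theorem Matrix.mem_jacobson_bot_iff {n : Type*} [Fintype n] [DecidableEq n]
    {M : Matrix n n A} :
    M ∈ (⊥ : Ideal (Matrix n n A)).jacobson ↔ ∀ i j, M i j ∈ (⊥ : Ideal A).jacobson := by
  have h := SetLike.ext_iff.mp (TwoSidedIdeal.matrix_jacobson_bot (R := A) (n := n)) M
  simpa [TwoSidedIdeal.mem_matrix, TwoSidedIdeal.jacobson] using h.symm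

theorem conj_mem_jacobson_bot (u : Aˣ) {x : A} (hx : x ∈ (⊥ : Ideal A).jacobson) :
    ↑u * x * ↑u⁻¹ ∈ (⊥ : Ideal A).jacobson :=
  Ideal.mul_mem_right _ _ (Ideal.mul_mem_left _ _ hx)

theorem exists_isConj_commute_sub_mem_jacobson_bot_iff {x p : A} :
    (∃ e, IsConj e p ∧ x * e = e * x ∧ x - e ∈ (⊥ : Ideal A).jacobson) ↔
      ∃ u : Aˣ, ↑u⁻¹ * x * ↑u * p = p * (↑u⁻¹ * x * ↑u) ∧
        ↑u⁻¹ * x * ↑u - p ∈ (⊥ : Ideal A).jacobson := by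
  constructor
  · rintro ⟨e, ⟨c, hc⟩, hxe, hJ⟩
    obtain rfl : p = ↑c * e * ↑c⁻¹ := by rw [hc.eq, Units.mul_inv_cancel_right]
    refine ⟨c⁻¹, ?_, ?_⟩
    · simp only [inv_inv, mul_assoc, Units.inv_mul_cancel_left, ← mul_assoc x, hxe]
    · simpa only [inv_inv, ← mul_sub, ← sub_mul] using conj_mem_jacobson_bot c hJ
  · rintro ⟨u, hcomm, hJ⟩
    refine ⟨↑u * p * ↑u⁻¹, ⟨u⁻¹, ?_⟩, ?_, ?_⟩
    · simp [SemiconjBy, mul_assoc]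
    · calc x * (↑u * p * ↑u⁻¹) = ↑u * (↑u⁻¹ * x * ↑u * p) * ↑u⁻¹ := by simp [mul_assoc]
        _ = ↑u * p * ↑u⁻¹ * x := by rw [hcomm]; simp [mul_assoc]
    · convert conj_mem_jacobson_bot u hJ using 1
      simp [mul_sub, sub_mul, mul_assoc]

end Jacobson

section Idempotent

variable {A : Type*} [Ring A]

theorem IsIdempotentElem.sub_sq {e p : A} (he : IsIdempotentElem e) (hp : IsIdempotentElem p) :
    (e - p) ^ 2 = e - e * p - p * e + p := by
  rw [sq, sub_mul, mul_sub, mul_sub, he.eq, hp.eq]; abel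

theorem IsIdempotentElem.of_isConj {e p : A} (h : IsConj e p) (hp : IsIdempotentElem p) :
    IsIdempotentElem e := by
  obtain ⟨c, hc⟩ := h
  obtain rfl : e = ↑c⁻¹ * p * ↑c := by rw [mul_assoc, ← hc.eq, Units.inv_mul_cancel_left]
  simp only [IsIdempotentElem, mul_assoc, Units.mul_inv_cancel_left, ← mul_assoc p p, hp.eq]

theorem IsIdempotentElem.isConj_of_isUnit {e p : A} (he : IsIdempotentElem e)
    (hp : IsIdempotentElem p) (h : IsUnit (1 - (e - p) ^ 2)) : IsConj e p := by
  have he' : ∀ x, x * e * e = x * e := fun x => by rw [mul_assoc, he.eq]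
  have hp' : ∀ x, x * p * p = x * p := fun x => by rw [mul_assoc, hp.eq]
  set u := p * e + (1 - p) * (1 - e)
  set v := e * p + (1 - e) * (1 - p)
  have huv : u * v = 1 - (e - p) ^ 2 := by
    simp only [u, v, sq, mul_add, add_mul, mul_sub, sub_mul, mul_one, one_mul, ← mul_assoc,
      he.eq, hp.eq, he']
    noncomm_ring
  have hvu : v * u = 1 - (e - p) ^ 2 := by
    simp only [u, v, sq, mul_add, add_mul, mul_sub, sub_mul, mul_one, one_mul, ← mul_assoc,
      he.eq, hp.eq, hp']
    noncomm_ring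
  have hu : IsUnit u := isUnit_iff_exists_and_exists.mpr
    ⟨⟨v * ↑h.unit⁻¹, by rw [← mul_assoc, huv, h.mul_val_inv]⟩,
      ⟨↑h.unit⁻¹ * v, by rw [mul_assoc, hvu, h.val_inv_mul]⟩⟩
  refine ⟨hu.unit, ?_⟩
  show u * e = p * u
  simp only [u, mul_add, add_mul, mul_sub, sub_mul, mul_one, one_mul, ← mul_assoc,
    he.eq, hp.eq, he']
  noncomm_ring

end Idempotent

namespace IsLocalRing

variable {R : Type*} [Ring R] [IsLocalRing R]

theorem eq_zero_or_one_of_isIdempotentElem {e : R} (he : IsIdempotentElem e) :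
    e = 0 ∨ e = 1 := by
  rcases isUnit_or_isUnit_of_add_one (add_sub_cancel e 1) with h | h
  · exact .inr ((IsIdempotentElem.iff_eq_one_of_isUnit h).mp he)
  · exact .inl (sub_eq_self.mp ((IsIdempotentElem.iff_eq_one_of_isUnit h).mp he.one_sub))

instance (priority := 100) toIsDedekindFiniteMonoid : IsDedekindFiniteMonoid R where
  mul_eq_one_symm {a b} hab := by
    have hba : IsIdempotentElem (b * a) := by
      rw [IsIdempotentElem, mul_assoc, ← mul_assoc a, hab, one_mul]
    refine (eq_zero_or_one_of_isIdempotentElem hba).resolve_left fun h0 => one_ne_zero (α := R) ?_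
    calc 1 = a * b * (a * b) := by rw [hab, one_mul]
      _ = a * (b * a) * b := by simp only [mul_assoc]
      _ = 0 := by rw [h0, mul_zero, zero_mul]

theorem mem_jacobson_bot_of_not_isUnit {x : R} (hx : ¬IsUnit x) :
    x ∈ (⊥ : Ideal R).jacobson := by
  refine Ideal.mem_jacobson_iff.mpr fun y => ?_
  have h : IsUnit (y * x + 1) :=
    (isUnit_or_isUnit_of_add_one (neg_add_cancel_left (y * x) 1)).resolve_left
      fun h => hx (isUnit_of_mul_isUnit_right ((IsUnit.neg_iff _).mp h))
  obtain ⟨z, hz⟩ := h.exists_left_inv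
  refine ⟨z, ?_⟩
  rw [Ideal.mem_bot, ← hz]
  noncomm_ring

end IsLocalRing

namespace FM

variable {R : Type*} [Ring R] {s : R}

@[simp] lemma sub_a (x y : FM R s) : (x - y).a = x.a - y.a := by simp [sub_eq_add_neg]
@[simp] lemma sub_b (x y : FM R s) : (x - y).b = x.b - y.b := by simp [sub_eq_add_neg]
@[simp] lemma sub_c (x y : FM R s) : (x - y).c = x.c - y.c := by simp [sub_eq_add_neg]
@[simp] lemma sub_d (x y : FM R s) : (x - y).d = x.d - y.d := by simp [sub_eq_add_neg]

theorem isIdempotentElem_mk_one_zero : IsIdempotentElem (mk 1 0 0 0 : FM R s) := by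
  ext <;> simp

theorem isIdempotentElem_mk_zero_one : IsIdempotentElem (mk 0 0 0 1 : FM R s) := by
  ext <;> simp

variable [Fact (∀ x : R, s * x = x * s)]

noncomputable def matrixEquiv (hs : IsUnit s) : FM R s ≃+* Matrix (Fin 2) (Fin 2) R where
  toFun x := !![x.a, s * x.b; s * x.c, x.d]
  invFun M := ⟨M 0 0, ↑hs.unit⁻¹ * M 0 1, ↑hs.unit⁻¹ * M 1 0, M 1 1⟩
  left_inv x := by ext <;> simp [← mul_assoc]
  right_inv M := by ext i j; fin_cases i <;> fin_cases j <;> simp [← mul_assoc]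
  map_add' x y := by ext i j; fin_cases i <;> fin_cases j <;> simp [mul_add]
  map_mul' x y := by
    have hc : ∀ u v : R, u * (s * v) = s * (u * v) := fun u v => by
      rw [← mul_assoc, ← (Fact.out : ∀ x : R, s * x = x * s) u, mul_assoc]
    ext i j; fin_cases i <;> fin_cases j <;> simp [Matrix.mul_apply, mul_add, mul_assoc, hc]

theorem mem_jacobson_bot_iff (hs : IsUnit s) {x : FM R s} :
    x ∈ (⊥ : Ideal (FM R s)).jacobson ↔
      x.a ∈ (⊥ : Ideal R).jacobson ∧ x.b ∈ (⊥ : Ideal R).jacobson ∧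
        x.c ∈ (⊥ : Ideal R).jacobson ∧ x.d ∈ (⊥ : Ideal R).jacobson := by
  have smul_mem_iff : ∀ r : R, s * r ∈ (⊥ : Ideal R).jacobson ↔ r ∈ (⊥ : Ideal R).jacobson :=
    fun r => ⟨fun h => by simpa [← mul_assoc] using Ideal.mul_mem_left _ (↑hs.unit⁻¹ : R) h,
      Ideal.mul_mem_left _ s⟩
  rw [← (matrixEquiv hs).map_mem_jacobson_bot_iff, Matrix.mem_jacobson_bot_iff]
  simp [Fin.forall_fin_two, matrixEquiv, smul_mem_iff, and_assoc]

theorem eq_zero_of_diag_mem_jacobson_bot (hs : IsUnit s) {E : FM R s}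
    (hE : IsIdempotentElem E) (ha : E.a ∈ (⊥ : Ideal R).jacobson)
    (hd : E.d ∈ (⊥ : Ideal R).jacobson) : E = 0 := by
  have hb : E.b ∈ (⊥ : Ideal R).jacobson := by
    obtain ⟨u, hu⟩ := isUnit_one_sub_of_mem_jacobson_bot ha
    have h : (1 - E.a) * E.b = E.b * E.d := by
      rw [sub_mul, one_mul, sub_eq_iff_eq_add, add_comm]
      exact (congrArg FM.b hE.eq).symm
    rw [← Units.inv_mul_cancel_left u E.b, hu, h]
    exact Ideal.mul_mem_left _ _ (Ideal.mul_mem_left _ _ hd)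
  have hc : E.c ∈ (⊥ : Ideal R).jacobson := by
    obtain ⟨u, hu⟩ := isUnit_one_sub_of_mem_jacobson_bot hd
    have h : (1 - E.d) * E.c = E.c * E.a := by
      rw [sub_mul, one_mul, sub_eq_iff_eq_add]
      exact (congrArg FM.c hE.eq).symm
    rw [← Units.inv_mul_cancel_left u E.c, hu, h]
    exact Ideal.mul_mem_left _ _ (Ideal.mul_mem_left _ _ ha)
  exact hE.eq_zero_of_mem_jacobson_bot ((mem_jacobson_bot_iff hs).mpr ⟨ha, hb, hc, hd⟩)

theorem isUnit_mk_diag {p q : R} (hp : IsUnit p) (hq : IsUnit q) :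
    IsUnit (mk p 0 0 q : FM R s) :=
  isUnit_iff_exists.mpr ⟨mk ↑hp.unit⁻¹ 0 0 ↑hq.unit⁻¹, by ext <;> simp, by ext <;> simp⟩

theorem isConj_mk_zero_one (hs : IsUnit s) : IsConj (mk 0 0 0 1 : FM R s) (mk 1 0 0 0) := by
  obtain ⟨t, ht⟩ := (hs.mul hs).exists_right_inv
  have hsq : (mk 0 1 t 0 : FM R s) * mk 0 1 t 0 = 1 := by ext <;> simp [ht]
  exact ⟨⟨_, _, hsq, hsq⟩, by ext <;> simp⟩

theorem one_sub_sq_sub_mk_one_zero {E : FM R s} (hE : IsIdempotentElem E) :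
    1 - (E - mk 1 0 0 0) ^ 2 = mk E.a 0 0 (1 - E.d) := by
  rw [hE.sub_sq isIdempotentElem_mk_one_zero]
  ext <;> simp

theorem one_sub_sq_sub_mk_zero_one {E : FM R s} (hE : IsIdempotentElem E) :
    1 - (E - mk 0 0 0 1) ^ 2 = mk (1 - E.a) 0 0 E.d := by
  rw [hE.sub_sq isIdempotentElem_mk_zero_one]
  ext <;> simp

theorem isConj_mk_one_zero [IsLocalRing R] (hs : IsUnit s) {E : FM R s}
    (hE : IsIdempotentElem E) (hE0 : E ≠ 0) (hE1 : E ≠ 1) : IsConj E (mk 1 0 0 0) := by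
  have hdiag : IsUnit E.a ∨ IsUnit E.d := by
    by_contra! h
    exact hE0 (eq_zero_of_diag_mem_jacobson_bot hs hE
      (IsLocalRing.mem_jacobson_bot_of_not_isUnit h.1)
      (IsLocalRing.mem_jacobson_bot_of_not_isUnit h.2))
  have hdiag' : IsUnit (1 - E.a) ∨ IsUnit (1 - E.d) := by
    by_contra! h
    refine hE1 (sub_eq_zero.mp (eq_zero_of_diag_mem_jacobson_bot hs hE.one_sub ?_ ?_)).symm
    · simpa using IsLocalRing.mem_jacobson_bot_of_not_isUnit h.1
    · simpa using IsLocalRing.mem_jacobson_bot_of_not_isUnit h.2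
  have ha := IsLocalRing.isUnit_or_isUnit_of_add_one (add_sub_cancel E.a 1)
  have hd := IsLocalRing.isUnit_or_isUnit_of_add_one (add_sub_cancel E.d 1)
  obtain ⟨ha, hd⟩ | ⟨ha, hd⟩ :
      (IsUnit E.a ∧ IsUnit (1 - E.d)) ∨ (IsUnit (1 - E.a) ∧ IsUnit E.d) := by tauto
  · refine hE.isConj_of_isUnit isIdempotentElem_mk_one_zero ?_
    rw [one_sub_sq_sub_mk_one_zero hE]
    exact isUnit_mk_diag ha hd
  · refine (hE.isConj_of_isUnit isIdempotentElem_mk_zero_one ?_).trans (isConj_mk_zero_one hs)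
    rw [one_sub_sq_sub_mk_zero_one hE]
    exact isUnit_mk_diag ha hd

theorem commute_mk_one_zero_and_sub_mem_jacobson_bot_iff (hs : IsUnit s) {X : FM R s} :
    (X * mk 1 0 0 0 = mk 1 0 0 0 * X ∧ X - mk 1 0 0 0 ∈ (⊥ : Ideal (FM R s)).jacobson) ↔
      ∃ v w : R, v - 1 ∈ (⊥ : Ideal R).jacobson ∧ w ∈ (⊥ : Ideal R).jacobson ∧
        X = mk v 0 0 w := by
  constructor
  · rintro ⟨hcomm, hJ⟩
    have hb : X.b = 0 := by simpa using (congrArg FM.b hcomm).symm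
    have hc : X.c = 0 := by simpa using congrArg FM.c hcomm
    obtain ⟨ha, -, -, hd⟩ := (mem_jacobson_bot_iff hs).mp hJ
    exact ⟨X.a, X.d, by simpa using ha, by simpa using hd, by ext <;> simp [hb, hc]⟩
  · rintro ⟨v, w, hv, hw, rfl⟩
    exact ⟨by ext <;> simp, (mem_jacobson_bot_iff hs).mpr (by simpa using ⟨hv, hw⟩)⟩

end FM

theorem stmt12 {R : Type*} [Ring R] [IsLocalRing R] (s : R)
    [Fact (∀ x : R, s * x = x * s)] (hs : IsUnit s) (A : FM R s) :
    IsStronglyJClean A ↔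
      A ∈ (⊥ : Ideal (FM R s)).jacobson ∨ 1 - A ∈ (⊥ : Ideal (FM R s)).jacobson ∨
        ∃ v w : R, v - 1 ∈ (⊥ : Ideal R).jacobson ∧ w ∈ (⊥ : Ideal R).jacobson ∧
          ∃ u : (FM R s)ˣ, ((u⁻¹ : (FM R s)ˣ) : FM R s) * A * (u : FM R s) = FM.mk v 0 0 w := by
  have hdiag : (∃ v w : R, v - 1 ∈ (⊥ : Ideal R).jacobson ∧ w ∈ (⊥ : Ideal R).jacobson ∧
        ∃ u : (FM R s)ˣ, ((u⁻¹ : (FM R s)ˣ) : FM R s) * A * (u : FM R s) = FM.mk v 0 0 w) ↔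
      ∃ e, IsConj e (FM.mk 1 0 0 0) ∧ A * e = e * A ∧ A - e ∈ (⊥ : Ideal (FM R s)).jacobson := by
    simp only [exists_isConj_commute_sub_mem_jacobson_bot_iff,
      FM.commute_mk_one_zero_and_sub_mem_jacobson_bot_iff hs]
    exact ⟨fun ⟨v, w, hv, hw, u, hu⟩ => ⟨u, v, w, hv, hw, hu⟩,
      fun ⟨u, v, w, hv, hw, hu⟩ => ⟨v, w, hv, hw, u, hu⟩⟩
  rw [hdiag]
  constructor
  · rintro ⟨E, hE, hAE, hJ⟩
    obtain rfl | hE0 := eq_or_ne E 0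
    · exact .inl (by simpa using hJ)
    obtain rfl | hE1 := eq_or_ne E 1
    · exact .inr (.inl (by simpa using neg_mem hJ))
    exact .inr (.inr ⟨E, FM.isConj_mk_one_zero hs hE hE0 hE1, hAE, hJ⟩)
  · rintro (hJ | hJ | ⟨e, he, hAe, hJ⟩)
    · exact ⟨0, .zero, by simp, by simpa using hJ⟩
    · exact ⟨1, .one, by simp, by simpa using neg_mem hJ⟩
    · exact ⟨e, .of_isConj he FM.isIdempotentElem_mk_one_zero, hAe, hJ⟩
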